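/- Let O be a complete discrete valuation ring with fraction field K, and let A be a finite (finite-cardinality) commutative local O-algebra. Set E = Hom_O(A, K/O), an A-module via (a·f)(x) = f(ax). Then the natural map A → Hom_A(E, E) sending a to multiplication by a is an isomorphism of rings. -/

import Mathlib

section Setup

variable (O : Type*) [CommRing O] [IsDomain O] [IsDiscreteValuationRing O]
  [IsAdicComplete (IsLocalRing.maximalIdeal O) O]
  (K : Type*) [Field K] [Algebra O K] [IsFractionRing O K]
  (A : Type*) [CommRing A] [Algebra O A] [IsLocalRing A] [Finite A]

/-- `K/O` as an `O`-module. -/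
abbrev QKO : Type _ := K ⧸ LinearMap.range (Algebra.linearMap O K)

/-- The Matlis dual `E = Hom_O(A, K/O)` of `A`. -/
abbrev MatlisE : Type _ := A →ₗ[O] QKO O K

/-- The `A`-module structure on `E = Hom_O(A, K/O)` given by `(a·f)(x) = f(a·x)`. -/
noncomputable instance : Module A (MatlisE O K A) where
  smul a f := f.comp (Algebra.lmul O A a)
  one_smul f := by
    show f.comp (Algebra.lmul O A 1) = f
    ext x; simp
  mul_smul a b f := by
    show f.comp (Algebra.lmul O A (a * b))
      = ((f.comp (Algebra.lmul O A b)).comp (Algebra.lmul O A a))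
    ext x; simp [mul_assoc, mul_comm, mul_left_comm]
  smul_zero a := by
    show (0 : MatlisE O K A).comp (Algebra.lmul O A a) = 0
    ext x; simp
  smul_add a f g := by
    show (f + g).comp (Algebra.lmul O A a)
      = f.comp (Algebra.lmul O A a) + g.comp (Algebra.lmul O A a)
    ext x; simp
  add_smul a b f := by
    show f.comp (Algebra.lmul O A (a + b))
      = f.comp (Algebra.lmul O A a) + f.comp (Algebra.lmul O A b)
    ext x; simp [mul_add, add_mul]
  zero_smul f := by
    show f.comp (Algebra.lmul O A 0) = 0
    ext x; simp

end Setup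

/-!
Over a PID, a finite torsion module `M` is a product of cyclic modules `O/(q)`, each of which
is self-dual for `K/O` via `(m, n) ↦ [mn/q]`. Hence `M^∨ = Hom_O(M, K/O)` has the cardinality
of `M` and separates its points, so the evaluation `M → M^∨∨` is bijective when `M` is finite.
On the other hand `End_A(E) = Hom_A(E, Hom_O(A, K/O)) ≅ Hom_O(E, K/O) = A^∨∨` via
`g ↦ (f ↦ g f 1)`, and this identification turns `A → End_A(E)` into the evaluation `A → A^∨∨`.
-/

namespace QKO

variable {O : Type*} [CommRing O] (K : Type*) [Field K] [Algebra O K]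

noncomputable def divMk (q : O) : O →ₗ[O] QKO O K :=
  Submodule.mkQ _ ∘ₗ LinearMap.toSpanSingleton O K (algebraMap O K q)⁻¹

lemma divMk_apply (q c : O) :
    divMk K q c = Submodule.Quotient.mk (algebraMap O K c / algebraMap O K q) := by
  simp [divMk, div_eq_mul_inv, Algebra.smul_def]

lemma divMk_self (q : O) : divMk K q q = 0 := by
  rw [divMk_apply, Submodule.Quotient.mk_eq_zero]
  by_cases hq : algebraMap O K q = 0
  · simp [hq]
  · exact ⟨1, by simp [hq]⟩

noncomputable def ofQuotSpan (q : O) : (O ⧸ O ∙ q) →ₗ[O] QKO O K :=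
  (O ∙ q).liftQ (divMk K q) <|
    (Submodule.span_singleton_le_iff_mem _ _).mpr (divMk_self K q)

@[simp]
lemma ofQuotSpan_mk (q c : O) : ofQuotSpan K q (Submodule.Quotient.mk c) = divMk K q c := rfl

noncomputable def quotSpanPairing (q : O) :
    (O ⧸ O ∙ q) →ₗ[O] (O ⧸ O ∙ q) →ₗ[O] QKO O K :=
  (LinearMap.mul O (O ⧸ O ∙ q)).compr₂ (ofQuotSpan K q)

lemma quotSpanPairing_apply (q : O) (m n : O ⧸ O ∙ q) :
    quotSpanPairing K q m n = ofQuotSpan K q (m * n) := rfl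

variable [IsFractionRing O K]

lemma divMk_eq_zero_iff {q : O} (hq : q ≠ 0) (c : O) : divMk K q c = 0 ↔ q ∣ c := by
  have hq' : algebraMap O K q ≠ 0 := (map_ne_zero_iff _ (IsFractionRing.injective O K)).mpr hq
  rw [divMk_apply, Submodule.Quotient.mk_eq_zero, LinearMap.mem_range]
  constructor
  · rintro ⟨d, hd⟩
    rw [Algebra.linearMap_apply, eq_div_iff hq', ← map_mul] at hd
    exact ⟨d, IsFractionRing.injective O K (by rw [← hd, mul_comm])⟩
  · rintro ⟨d, rfl⟩
    exact ⟨d, by rw [Algebra.linearMap_apply, map_mul, mul_div_cancel_left₀ _ hq']⟩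

lemma exists_divMk_eq_of_smul_eq_zero {q : O} (hq : q ≠ 0) {y : QKO O K} (hy : q • y = 0) :
    ∃ c : O, divMk K q c = y := by
  have hq' : algebraMap O K q ≠ 0 := (map_ne_zero_iff _ (IsFractionRing.injective O K)).mpr hq
  obtain ⟨z, rfl⟩ := Submodule.Quotient.mk_surjective _ y
  rw [← Submodule.Quotient.mk_smul, Submodule.Quotient.mk_eq_zero] at hy
  obtain ⟨c, hc⟩ := hy
  rw [Algebra.linearMap_apply, Algebra.smul_def] at hc
  exact ⟨c, by rw [divMk_apply, hc, mul_div_cancel_left₀ _ hq']⟩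

lemma ofQuotSpan_injective {q : O} (hq : q ≠ 0) : Function.Injective (ofQuotSpan K q) := by
  rw [← LinearMap.ker_eq_bot, LinearMap.ker_eq_bot']
  intro m hm
  obtain ⟨c, rfl⟩ := Submodule.Quotient.mk_surjective _ m
  rw [ofQuotSpan_mk, divMk_eq_zero_iff K hq] at hm
  exact (Submodule.Quotient.mk_eq_zero _).mpr (Ideal.mem_span_singleton.mpr hm)

lemma quotSpanPairing_bijective {q : O} (hq : q ≠ 0) :
    Function.Bijective (quotSpanPairing K q) := by
  refine ⟨fun m m' h => ofQuotSpan_injective K hq ?_, fun f => ?_⟩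
  · simpa only [quotSpanPairing_apply, mul_one] using LinearMap.congr_fun h 1
  · have hf : q • f 1 = 0 := by
      rw [← map_smul, Algebra.smul_def, Ideal.Quotient.algebraMap_eq,
        Ideal.Quotient.eq_zero_iff_mem.mpr (Ideal.mem_span_singleton_self q), zero_mul, map_zero]
    obtain ⟨c, hc⟩ := exists_divMk_eq_of_smul_eq_zero K hq hf
    refine ⟨Submodule.Quotient.mk c, Submodule.linearMap_qext _ (LinearMap.ext_ring ?_)⟩
    change ofQuotSpan K q (Submodule.Quotient.mk c * 1) = f 1
    rwa [mul_one]

end QKO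

section Duality

universe u

variable {O : Type u} [CommRing O] [IsDomain O] [IsPrincipalIdealRing O]
  {M : Type*} [AddCommGroup M] [Module O M] [Module.Finite O M]

lemma Module.exists_linearEquiv_pi_quotSpan (hM : Module.IsTorsion O M) :
    ∃ (ι : Type u) (_ : Fintype ι) (q : ι → O), (∀ i, q i ≠ 0) ∧
      Nonempty (M ≃ₗ[O] Π i, O ⧸ O ∙ q i) := by
  obtain ⟨ι, _, p, hp, e, ⟨f⟩⟩ := Module.equiv_directSum_of_isTorsion hM
  exact ⟨ι, inferInstance, fun i => p i ^ e i, fun i => pow_ne_zero _ (hp i).ne_zero,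
    ⟨f.trans (DirectSum.linearEquivFunOnFintype O ι _)⟩⟩

variable (K : Type*) [Field K] [Algebra O K] [IsFractionRing O K]

lemma Module.nonempty_linearEquiv_dual_QKO (hM : Module.IsTorsion O M) :
    Nonempty (M ≃ₗ[O] (M →ₗ[O] QKO O K)) := by
  classical
  obtain ⟨ι, _, q, hq, ⟨e⟩⟩ := Module.exists_linearEquiv_pi_quotSpan hM
  let selfDual : ∀ i, (O ⧸ O ∙ q i) ≃ₗ[O] ((O ⧸ O ∙ q i) →ₗ[O] QKO O K) := fun i =>
    .ofBijective _ (QKO.quotSpanPairing_bijective K (hq i))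
  exact ⟨e ≪≫ₗ LinearEquiv.piCongrRight selfDual ≪≫ₗ LinearMap.lsum O _ O ≪≫ₗ
    e.symm.arrowCongr (LinearEquiv.refl O _)⟩

lemma Module.exists_dual_QKO_apply_ne_zero (hM : Module.IsTorsion O M) {x : M} (hx : x ≠ 0) :
    ∃ f : M →ₗ[O] QKO O K, f x ≠ 0 := by
  obtain ⟨ι, _, q, hq, ⟨e⟩⟩ := Module.exists_linearEquiv_pi_quotSpan hM
  obtain ⟨i, hi⟩ := Function.ne_iff.mp ((map_ne_zero_iff e e.injective).mpr hx)
  exact ⟨QKO.ofQuotSpan K (q i) ∘ₗ LinearMap.proj i ∘ₗ e.toLinearMap,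
    (map_ne_zero_iff _ (QKO.ofQuotSpan_injective K (hq i))).mpr hi⟩

lemma Module.bijective_applyₗ_dual_QKO [Finite M] (hM : Module.IsTorsion O M) :
    Function.Bijective (LinearMap.applyₗ (R := O) (M := M) (M₂ := QKO O K)) := by
  obtain ⟨e⟩ := Module.nonempty_linearEquiv_dual_QKO K hM
  let e' : (M →ₗ[O] QKO O K) ≃ₗ[O] ((M →ₗ[O] QKO O K) →ₗ[O] QKO O K) :=
    e.arrowCongr (.refl O _)
  have : Finite ((M →ₗ[O] QKO O K) →ₗ[O] QKO O K) := .of_equiv M (e ≪≫ₗ e').toEquiv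
  have card_eq : Nat.card ((M →ₗ[O] QKO O K) →ₗ[O] QKO O K) = Nat.card M :=
    (Nat.card_congr (e ≪≫ₗ e').toEquiv).symm
  refine (Nat.bijective_iff_injective_and_card _).mpr ⟨?_, card_eq.symm⟩
  rw [← LinearMap.ker_eq_bot, LinearMap.ker_eq_bot']
  intro x hx
  by_contra hx0
  obtain ⟨f, hf⟩ := Module.exists_dual_QKO_apply_ne_zero K hM hx0
  exact hf (LinearMap.congr_fun hx f)

end Duality

lemma IsDiscreteValuationRing.infinite (O : Type*) [CommRing O] [IsDomain O]
    [IsDiscreteValuationRing O] : Infinite O := by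
  by_contra h
  have : Finite O := not_infinite_iff_finite.mp h
  exact IsDiscreteValuationRing.not_a_field O
    (IsLocalRing.isField_iff_maximalIdeal_eq.mp (Finite.isField_of_domain O))

lemma Module.isTorsion_of_finite (R M : Type*) [CommRing R] [IsDomain R] [Infinite R]
    [AddCommGroup M] [Module R M] [Finite M] : Module.IsTorsion R M := by
  intro x
  obtain ⟨a, b, hab, hne⟩ :=
    Function.not_injective_iff.mp (not_injective_infinite_finite fun c : R => c • x)
  refine ⟨⟨a - b, mem_nonZeroDivisors_of_ne_zero (sub_ne_zero_of_ne hne)⟩, ?_⟩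
  simpa [sub_smul, sub_eq_zero] using hab

namespace MatlisE

variable (O : Type*) [CommRing O] (K : Type*) [Field K] [Algebra O K]
  (A : Type*) [CommRing A] [Algebra O A]

lemma smul_apply (a : A) (f : MatlisE O K A) (x : A) : (a • f) x = f (a * x) := rfl

instance : IsScalarTower O A (MatlisE O K A) :=
  ⟨fun c a f => LinearMap.ext fun x => by
    rw [smul_apply, LinearMap.smul_apply, smul_apply, smul_mul_assoc, map_smul]⟩

variable {O K A} {N : Type*} [AddCommGroup N] [Module A N] [Module O N] [IsScalarTower O A N]

noncomputable def homEquiv : (N →ₗ[A] MatlisE O K A) ≃ (N →ₗ[O] QKO O K) where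
  toFun g := LinearMap.applyₗ (1 : A) ∘ₗ g.restrictScalars O
  invFun h :=
    { toFun n := h ∘ₗ (LinearMap.toSpanSingleton A N n).restrictScalars O
      map_add' n n' := LinearMap.ext fun a => by simp
      map_smul' b n := LinearMap.ext fun a => by
        simp [smul_apply, smul_smul, mul_comm] }
  left_inv g := LinearMap.ext fun n => LinearMap.ext fun a => by
    simp [smul_apply]
  right_inv h := LinearMap.ext fun n => by simp

lemma homEquiv_comp_algebraMap :
    homEquiv ∘ algebraMap A (Module.End A (MatlisE O K A)) = LinearMap.applyₗ :=
  funext fun a => LinearMap.ext fun f => by simp [homEquiv, smul_apply]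

end MatlisE

theorem stmt14_general (O : Type*) [CommRing O] [IsDomain O] [IsDiscreteValuationRing O]
    (K : Type*) [Field K] [Algebra O K] [IsFractionRing O K]
    (A : Type*) [CommRing A] [Algebra O A] [Finite A] :
    Function.Bijective (algebraMap A (Module.End A (MatlisE O K A))) := by
  have : Infinite O := IsDiscreteValuationRing.infinite O
  have hA := Module.bijective_applyₗ_dual_QKO K (Module.isTorsion_of_finite O A)
  rwa [← MatlisE.homEquiv_comp_algebraMap, MatlisE.homEquiv.bijective.of_comp_iff'] at hA

/-- Matlis duality for a finite local `O`-algebra `A` over a complete DVR `O`: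
with `E = Hom_O(A, K/O)`, the natural ring map `A → End_A(E)`, sending `a` to
multiplication by `a`, is an isomorphism. -/
theorem stmt14 (O : Type*) [CommRing O] [IsDomain O] [IsDiscreteValuationRing O]
    [IsAdicComplete (IsLocalRing.maximalIdeal O) O]
    (K : Type*) [Field K] [Algebra O K] [IsFractionRing O K]
    (A : Type*) [CommRing A] [Algebra O A] [IsLocalRing A] [Finite A] :
    Function.Bijective (algebraMap A (Module.End A (MatlisE O K A))) :=
  stmt14_general O K A
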